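/- arXiv:1806.06806 — 4 statements merged into one kernel-verified Lean document; each statement's English description precedes it below -/
import Mathlib

section
/- Let f : ℝ → ℝ be convex and M an n×n Hermitian (complex self-adjoint) matrix. Then the map M ↦ Tr f(M), where f is applied spectrally, is convex on the real vector space of n×n Hermitian matrices. -/
/-!
Diagonalise `C = t • A + (1 - t) • B` by a unitary `V`. Then
`λᵢ(C) = t (V⋆AV)ᵢᵢ + (1 - t) (V⋆BV)ᵢᵢ`, so convexity of `f` reduces the claim to the Peierls
inequality `∑ᵢ f (V⋆AV)ᵢᵢ ≤ ∑ⱼ f (λⱼ(A))`. Writing `A = U D U⋆`, the diagonal of `V⋆AV` is the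
image of the eigenvalues of `A` under the doubly stochastic matrix `(‖(V⋆U)ᵢⱼ‖²)ᵢⱼ`, and Jensen's
inequality applied to each row gives the Peierls inequality.
-/

open Finset Matrix

theorem ConvexOn.sum_map_sum_smul_le {𝕜 E β n : Type*} [Field 𝕜] [LinearOrder 𝕜]
    [IsStrictOrderedRing 𝕜] [AddCommGroup E] [AddCommGroup β] [PartialOrder β]
    [IsOrderedAddMonoid β] [Module 𝕜 E] [Module 𝕜 β] [IsStrictOrderedModule 𝕜 β]
    [Fintype n] [DecidableEq n] {s : Set E} {f : E → β} (hf : ConvexOn 𝕜 s f)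
    {M : Matrix n n 𝕜} (hM : M ∈ doublyStochastic 𝕜 n) {x : n → E} (hx : ∀ j, x j ∈ s) :
    ∑ i, f (∑ j, M i j • x j) ≤ ∑ j, f (x j) :=
  calc ∑ i, f (∑ j, M i j • x j)
      ≤ ∑ i, ∑ j, M i j • f (x j) := sum_le_sum fun i _ ↦
        hf.map_sum_le (fun j _ ↦ nonneg_of_mem_doublyStochastic hM)
          (sum_row_of_mem_doublyStochastic hM i) fun j _ ↦ hx j
    _ = ∑ j, f (x j) := by
        rw [sum_comm]
        simp only [← sum_smul, sum_col_of_mem_doublyStochastic hM, one_smul]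

section

variable {𝕜 n : Type*} [RCLike 𝕜] [Fintype n] [DecidableEq n]

theorem Matrix.of_norm_sq_mem_doublyStochastic {U : Matrix n n 𝕜} (hU : U ∈ unitaryGroup n 𝕜) :
    (of fun i j ↦ ‖U i j‖ ^ 2) ∈ doublyStochastic ℝ n := by
  refine mem_doublyStochastic_iff_sum.2 ⟨fun _ _ ↦ sq_nonneg _, fun i ↦ ?_, fun j ↦ ?_⟩
  · have h := congr_fun₂ (mem_unitaryGroup_iff.1 hU) i i
    simp only [mul_apply, star_apply, RCLike.star_def, RCLike.mul_conj, one_apply_eq] at h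
    exact_mod_cast h
  · have h := congr_fun₂ (mem_unitaryGroup_iff'.1 hU) j j
    simp only [mul_apply, star_apply, RCLike.star_def, RCLike.conj_mul, one_apply_eq] at h
    exact_mod_cast h

theorem Matrix.mul_diagonal_mul_star_apply_self (P : Matrix n n 𝕜) (d : n → ℝ) (i : n) :
    (P * diagonal (RCLike.ofReal ∘ d) * star P : Matrix n n 𝕜) i i =
      ((∑ j, ‖P i j‖ ^ 2 * d j : ℝ) : 𝕜) := by
  rw [mul_apply]
  simp only [mul_diagonal, star_apply, RCLike.star_def, Function.comp_apply]
  push_cast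
  refine sum_congr rfl fun j _ ↦ ?_
  rw [← RCLike.mul_conj]
  ring

namespace Matrix.IsHermitian

variable {A : Matrix n n 𝕜} (hA : A.IsHermitian)

theorem eigenvalues_eq_re_diag_conj (i : n) :
    hA.eigenvalues i = RCLike.re
      ((star (hA.eigenvectorUnitary : Matrix n n 𝕜) * A * hA.eigenvectorUnitary) i i) := by
  rw [← Unitary.conjStarAlgAut_star_apply (S := 𝕜), hA.conjStarAlgAut_star_eigenvectorUnitary]
  simp

theorem sum_map_re_diag_conj_le {s : Set ℝ} {f : ℝ → ℝ} (hf : ConvexOn ℝ s f)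
    (hs : ∀ i, hA.eigenvalues i ∈ s) {V : Matrix n n 𝕜} (hV : V ∈ unitaryGroup n 𝕜) :
    ∑ i, f (RCLike.re ((star V * A * V) i i)) ≤ ∑ i, f (hA.eigenvalues i) := by
  set P := star V * (hA.eigenvectorUnitary : Matrix n n 𝕜)
  have hP : P ∈ unitaryGroup n 𝕜 := mul_mem (Unitary.star_mem hV) hA.eigenvectorUnitary.2
  have hconj : star V * A * V = P * diagonal (RCLike.ofReal ∘ hA.eigenvalues) * star P := by
    conv_lhs => rw [hA.spectral_theorem, Unitary.conjStarAlgAut_apply]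
    simp only [P, star_mul, star_star, Matrix.mul_assoc]
  have hdiag (i : n) : RCLike.re ((star V * A * V) i i) = ∑ j, ‖P i j‖ ^ 2 • hA.eigenvalues j := by
    rw [hconj, mul_diagonal_mul_star_apply_self, RCLike.ofReal_re]
    rfl
  simp only [hdiag]
  exact hf.sum_map_sum_smul_le (of_norm_sq_mem_doublyStochastic hP) hs

end Matrix.IsHermitian

end

/-- **Klein's lemma.** If `f : ℝ → ℝ` is convex, then the map `M ↦ Tr f(M)`
(`f` applied spectrally, i.e. `Tr f(M) = ∑ i, f (λᵢ(M))`) is convex on the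
real vector space of `n × n` Hermitian complex matrices. -/
theorem klein_lemma (n : ℕ) (f : ℝ → ℝ) (hf : ConvexOn ℝ Set.univ f)
    (A B : Matrix (Fin n) (Fin n) ℂ) (hA : A.IsHermitian) (hB : B.IsHermitian)
    (t : ℝ) (ht0 : 0 ≤ t) (ht1 : t ≤ 1)
    (hC : (t • A + (1 - t) • B).IsHermitian) :
    ∑ i, f (hC.eigenvalues i) ≤
      t * ∑ i, f (hA.eigenvalues i) + (1 - t) * ∑ i, f (hB.eigenvalues i) := by
  set V : Matrix (Fin n) (Fin n) ℂ := ↑hC.eigenvectorUnitary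
  have hV : V ∈ unitaryGroup (Fin n) ℂ := hC.eigenvectorUnitary.2
  have hsplit (i : Fin n) : hC.eigenvalues i =
      t * ((star V * A * V) i i).re + (1 - t) * ((star V * B * V) i i).re := by
    rw [hC.eigenvalues_eq_re_diag_conj]
    simp [V, Matrix.mul_add, Matrix.add_mul]
  calc ∑ i, f (hC.eigenvalues i)
      ≤ ∑ i, (t * f ((star V * A * V) i i).re + (1 - t) * f ((star V * B * V) i i).re) :=
        sum_le_sum fun i _ ↦ hsplit i ▸
          hf.2 (Set.mem_univ _) (Set.mem_univ _) ht0 (sub_nonneg.2 ht1) (add_sub_cancel t 1)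
    _ = t * ∑ i, f ((star V * A * V) i i).re + (1 - t) * ∑ i, f ((star V * B * V) i i).re := by
        rw [sum_add_distrib, mul_sum, mul_sum]
    _ ≤ t * ∑ i, f (hA.eigenvalues i) + (1 - t) * ∑ i, f (hB.eigenvalues i) :=
        add_le_add
          (mul_le_mul_of_nonneg_left (hA.sum_map_re_diag_conj_le hf (fun _ ↦ trivial) hV) ht0)
          (mul_le_mul_of_nonneg_left (hB.sum_map_re_diag_conj_le hf (fun _ ↦ trivial) hV)
            (sub_nonneg.2 ht1))
end

section
/- Let f : ℝ≥0 → ℝ and α > 0 be such that x ↦ f(x²) - (α/2)x² is convex on ℝ. Then for any fixed diagonal values (t₁₁,…,tₙₙ) ∈ ℂⁿ, the function sending the strictly-upper-triangular entries (t_{ij})_{i<j} ∈ ℂ^{n(n-1)/2} to Tr f(T*T) - (α/2) ∑_{i<j} |t_{ij}|² is convex, where T is the upper triangular matrix with entries (t_{ij})_{i≤j}. -/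
/-!
With `g x = f (x²) - (α/2) x²`, the Hermitian dilation `H(T) = [[0, T], [Tᴴ, 0]]` has eigenvalues
`±σᵢ(T)`, hence `∑ⱼ g (λⱼ(H(T))) = 2 Tr f(TᴴT) - α ‖T‖²_F`, and `‖T‖²_F` exceeds `∑_{i<j} |t_{ij}|²`
by the constant `∑ᵢ |tᵢᵢ|²`. As `H(T)` is affine in the strictly upper entries, it remains to see
that `X ↦ ∑ g (λ(X))` is convex on Hermitian matrices. This is Peierls' inequality: in the
eigenbasis of `a X + b Y`, the diagonals of `X` and `Y` are images of their spectra under doubly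
stochastic matrices, which can only decrease `∑ g`.
-/

open Finset Matrix Polynomial

theorem ConvexOn.sum_comp_mulVec_le {n : Type*} [Fintype n] [DecidableEq n] {g : ℝ → ℝ}
    (hg : ConvexOn ℝ Set.univ g) {M : Matrix n n ℝ} (hM : M ∈ doublyStochastic ℝ n)
    (x : n → ℝ) : ∑ i, g ((M *ᵥ x) i) ≤ ∑ i, g (x i) :=
  calc ∑ i, g ((M *ᵥ x) i) = ∑ i, g (∑ j, M i j • x j) := rfl
    _ ≤ ∑ i, ∑ j, M i j • g (x j) := sum_le_sum fun i _ =>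
        hg.map_sum_le (fun j _ => nonneg_of_mem_doublyStochastic hM)
          (sum_row_of_mem_doublyStochastic hM i) fun _ _ => Set.mem_univ _
    _ = ∑ j, g (x j) := by
        rw [sum_comm]
        simp only [← sum_smul, sum_col_of_mem_doublyStochastic hM, one_smul]

namespace Matrix

variable {𝕜 n : Type*} [RCLike 𝕜]

def hermitianDilation (A : Matrix n n 𝕜) : Matrix (n ⊕ n) (n ⊕ n) 𝕜 :=
  fromBlocks 0 A Aᴴ 0

theorem isHermitian_hermitianDilation (A : Matrix n n 𝕜) : (hermitianDilation A).IsHermitian :=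
  isHermitian_zero.fromBlocks rfl isHermitian_zero

theorem hermitianDilation_add (A B : Matrix n n 𝕜) :
    hermitianDilation (A + B) = hermitianDilation A + hermitianDilation B := by
  simp [hermitianDilation, fromBlocks_add]

theorem hermitianDilation_smul (c : ℝ) (A : Matrix n n 𝕜) :
    hermitianDilation (c • A) = c • hermitianDilation A := by
  simp [hermitianDilation, fromBlocks_smul, conjTranspose_smul]

variable [Fintype n] [DecidableEq n]

theorem norm_sq_entries_mem_doublyStochastic {U : Matrix n n 𝕜} (hU : U ∈ unitaryGroup n 𝕜) :
    (of fun i j => ‖U i j‖ ^ 2 : Matrix n n ℝ) ∈ doublyStochastic ℝ n := by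
  refine mem_doublyStochastic_iff_sum.2 ⟨fun _ _ => sq_nonneg _, fun i => ?_, fun j => ?_⟩
  · have h := congr_fun₂ (mem_unitaryGroup_iff.1 hU) i i
    simp only [mul_apply, star_apply, RCLike.star_def, RCLike.mul_conj, one_apply_eq] at h
    exact_mod_cast h
  · have h := congr_fun₂ (mem_unitaryGroup_iff'.1 hU) j j
    simp only [mul_apply, star_apply, RCLike.star_def, RCLike.conj_mul, one_apply_eq] at h
    exact_mod_cast h

theorem re_mul_diagonal_mul_star_apply_self (V : Matrix n n 𝕜) (d : n → ℝ) (j : n) :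
    RCLike.re ((V * diagonal (RCLike.ofReal ∘ d) * star V : Matrix n n 𝕜) j j)
      = ((of fun i k => ‖V i k‖ ^ 2 : Matrix n n ℝ) *ᵥ d) j := by
  simp only [mul_apply (M := V * _), mul_diagonal, star_apply, RCLike.star_def,
    Function.comp_apply, mulVec, dotProduct, of_apply, map_sum]
  refine sum_congr rfl fun k _ => ?_
  rw [mul_right_comm, RCLike.mul_conj, ← RCLike.ofReal_pow, ← RCLike.ofReal_mul, RCLike.ofReal_re]

theorem IsHermitian.sum_comp_re_diag_conj_le {g : ℝ → ℝ} (hg : ConvexOn ℝ Set.univ g)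
    {A : Matrix n n 𝕜} (hA : A.IsHermitian) {U : Matrix n n 𝕜} (hU : U ∈ unitaryGroup n 𝕜) :
    ∑ j, g (RCLike.re ((star U * A * U) j j)) ≤ ∑ j, g (hA.eigenvalues j) := by
  set V : Matrix n n 𝕜 := (hA.eigenvectorUnitary : Matrix n n 𝕜)
  have hR : star U * V ∈ unitaryGroup n 𝕜 :=
    Submonoid.mul_mem _ (Unitary.star_mem hU) hA.eigenvectorUnitary.2
  have hconj : star U * A * U = (star U * V) * diagonal (RCLike.ofReal ∘ hA.eigenvalues)
      * star (star U * V) := by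
    conv_lhs => rw [hA.spectral_theorem, Unitary.conjStarAlgAut_apply]
    simp only [star_mul, star_star, Matrix.mul_assoc]
    rfl
  simp only [hconj, re_mul_diagonal_mul_star_apply_self]
  exact hg.sum_comp_mulVec_le (norm_sq_entries_mem_doublyStochastic hR) _

theorem convexOn_sum_comp_eigenvalues {E : Type*} [AddCommGroup E] [Module ℝ E] {g : ℝ → ℝ}
    (hg : ConvexOn ℝ Set.univ g) {F : E → Matrix n n 𝕜} (hF : ∀ x, (F x).IsHermitian)
    (hF_combo : ∀ x y {a b : ℝ}, a + b = 1 → F (a • x + b • y) = a • F x + b • F y) :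
    ConvexOn ℝ Set.univ fun x => ∑ i, g ((hF x).eigenvalues i) := by
  refine ⟨convex_univ, fun x _ y _ a b ha hb hab => ?_⟩
  set U : Matrix n n 𝕜 := ((hF (a • x + b • y)).eigenvectorUnitary : Matrix n n 𝕜)
  have hU : U ∈ unitaryGroup n 𝕜 := (hF (a • x + b • y)).eigenvectorUnitary.2
  let diagIn (A : Matrix n n 𝕜) (j : n) : ℝ := RCLike.re ((star U * A * U) j j)
  have heig (j : n) : (hF (a • x + b • y)).eigenvalues j
      = a * diagIn (F x) j + b * diagIn (F y) j := by
    have hdiag : star U * (a • F x + b • F y) * U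
        = diagonal (RCLike.ofReal ∘ (hF (a • x + b • y)).eigenvalues) := by
      have := (hF (a • x + b • y)).conjStarAlgAut_star_eigenvectorUnitary
      rw [Unitary.conjStarAlgAut_star_apply] at this
      rwa [← hF_combo x y hab]
    have := congr_arg RCLike.re (congr_fun₂ hdiag j j)
    simpa [diagIn, Matrix.mul_add, Matrix.add_mul, RCLike.smul_re] using this.symm
  calc ∑ j, g ((hF (a • x + b • y)).eigenvalues j)
      ≤ ∑ j, (a * g (diagIn (F x) j) + b * g (diagIn (F y) j)) := sum_le_sum fun j _ => by
        rw [heig j]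
        exact hg.2 (Set.mem_univ _) (Set.mem_univ _) ha hb hab
    _ = a * ∑ j, g (diagIn (F x) j) + b * ∑ j, g (diagIn (F y) j) := by
        rw [sum_add_distrib, mul_sum, mul_sum]
    _ ≤ a * ∑ j, g ((hF x).eigenvalues j) + b * ∑ j, g ((hF y).eigenvalues j) := by
        grw [(hF x).sum_comp_re_diag_conj_le hg hU, (hF y).sum_comp_re_diag_conj_le hg hU]

theorem charpoly_hermitianDilation_mul_self (A : Matrix n n 𝕜) :
    (hermitianDilation A * hermitianDilation A).charpoly = (Aᴴ * A).charpoly ^ 2 := by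
  simp [hermitianDilation, fromBlocks_multiply, charpoly_mul_comm A Aᴴ, sq]

theorem sum_comp_sq_eigenvalues_hermitianDilation (A : Matrix n n 𝕜)
    (hK : (Aᴴ * A).IsHermitian) (φ : ℝ → ℝ) :
    ∑ j, φ ((isHermitian_hermitianDilation A).eigenvalues j ^ 2)
      = 2 * ∑ i, φ (hK.eigenvalues i) := by
  set hD := isHermitian_hermitianDilation A
  have hcharpoly : ∏ j, (X - C ((hD.eigenvalues j ^ 2 : ℝ) : 𝕜)) = (Aᴴ * A).charpoly ^ 2 := by
    have := hD.charpoly_cfc_eq (· ^ 2)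
    rwa [cfc_pow_id _ 2 hD.isSelfAdjoint, sq, charpoly_hermitianDilation_mul_self,
      eq_comm] at this
  have hroots : univ.val.map (fun j => ((hD.eigenvalues j ^ 2 : ℝ) : 𝕜))
      = 2 • univ.val.map (RCLike.ofReal ∘ hK.eigenvalues) := by
    rw [← hK.roots_charpoly_eq_eigenvalues, ← roots_pow, ← hcharpoly, prod_eq_multiset_prod]
    simpa only [Multiset.map_map, Function.comp_def] using
      (roots_multiset_prod_X_sub_C (univ.val.map fun j => ((hD.eigenvalues j ^ 2 : ℝ) : 𝕜))).symm
  have := congr_arg (fun s => (s.map (φ ∘ RCLike.re)).sum) hroots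
  simp only [Multiset.map_nsmul, Multiset.sum_nsmul, Multiset.map_map, Function.comp_def,
    RCLike.ofReal_re] at this
  rw [sum_eq_multiset_sum, this, sum_eq_multiset_sum, nsmul_eq_mul, Nat.cast_ofNat]

theorem IsHermitian.sum_eigenvalues_conjTranspose_mul_self {A : Matrix n n 𝕜}
    (hK : (Aᴴ * A).IsHermitian) : ∑ i, hK.eigenvalues i = ∑ i, ∑ j, ‖A i j‖ ^ 2 := by
  apply RCLike.ofReal_injective (K := 𝕜)
  rw [RCLike.ofReal_sum, ← hK.trace_eq_sum_eigenvalues, trace, sum_comm]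
  simp [mul_apply, RCLike.conj_mul]

end Matrix

section UpperTriangular

variable {𝕜 ι : Type*} [RCLike 𝕜] [LinearOrder ι]

def upperTriangularOf (d : ι → 𝕜) (u : {p : ι × ι // p.1 < p.2} → 𝕜) : Matrix ι ι 𝕜 :=
  of fun i j => if h : i < j then u ⟨(i, j), h⟩ else if i = j then d i else 0

theorem upperTriangularOf_combo (d : ι → 𝕜) (u v : {p : ι × ι // p.1 < p.2} → 𝕜) {a b : ℝ}
    (hab : a + b = 1) :
    upperTriangularOf d (a • u + b • v)
      = a • upperTriangularOf d u + b • upperTriangularOf d v := by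
  ext i j
  simp only [upperTriangularOf, of_apply, Pi.add_apply, Pi.smul_apply, Matrix.add_apply,
    Matrix.smul_apply]
  split_ifs <;> simp [← add_smul, hab]

theorem sum_norm_sq_upperTriangularOf [Fintype ι] (d : ι → 𝕜)
    (u : {p : ι × ι // p.1 < p.2} → 𝕜) :
    ∑ i, ∑ j, ‖upperTriangularOf d u i j‖ ^ 2 = ∑ p, ‖u p‖ ^ 2 + ∑ i, ‖d i‖ ^ 2 := by
  have hsplit (q : ι × ι) : ‖upperTriangularOf d u q.1 q.2‖ ^ 2
      = (if h : q.1 < q.2 then ‖u ⟨q, h⟩‖ ^ 2 else 0) + ‖diagonal d q.1 q.2‖ ^ 2 := by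
    rcases lt_trichotomy q.1 q.2 with h | h | h
    · simp [upperTriangularOf, h, h.ne]
    · simp [upperTriangularOf, h]
    · simp [upperTriangularOf, h.not_gt, h.ne']
  rw [← Fintype.sum_prod_type', Fintype.sum_congr _ _ hsplit, sum_add_distrib]
  congr 1
  · rw [← Fintype.sum_subtype_add_sum_subtype (fun q : ι × ι => q.1 < q.2),
      Fintype.sum_congr _ _ fun q => dif_pos q.2, Fintype.sum_congr _ _ fun q => dif_neg q.2,
      sum_const_zero, add_zero]
  · simp [Fintype.sum_prod_type, diagonal_apply, apply_ite (‖·‖ ^ 2)]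

end UpperTriangular

open ComplexOrder in
theorem convex_trace_f_upperTriangular_general (n : ℕ) (f : NNReal → ℝ) (α : ℝ)
    (hconv : ConvexOn ℝ Set.univ fun x : ℝ => f (x ^ 2).toNNReal - α / 2 * x ^ 2)
    (d : Fin n → ℂ)
    (T : ({p : Fin n × Fin n // p.1 < p.2} → ℂ) → Matrix (Fin n) (Fin n) ℂ)
    (hT : ∀ u, T u = Matrix.of fun i j =>
      if h : i < j then u ⟨(i, j), h⟩ else if i = j then d i else 0) :
    ConvexOn ℝ Set.univ fun u : {p : Fin n × Fin n // p.1 < p.2} → ℂ =>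
      (∑ i, f ((Matrix.posSemidef_conjTranspose_mul_self (T u)).1.eigenvalues i).toNNReal)
        - α / 2 * ∑ p : {p : Fin n × Fin n // p.1 < p.2}, ‖u p‖ ^ 2 := by
  obtain rfl : T = upperTriangularOf d := funext hT
  set g : ℝ → ℝ := fun x => f (x ^ 2).toNNReal - α / 2 * x ^ 2
  have hdilation (u : {p : Fin n × Fin n // p.1 < p.2} → ℂ) :
      let hK := (posSemidef_conjTranspose_mul_self (upperTriangularOf d u)).1
      (∑ i, f (hK.eigenvalues i).toNNReal) - α / 2 * ∑ p, ‖u p‖ ^ 2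
        = 2⁻¹ * ∑ j, g ((isHermitian_hermitianDilation (upperTriangularOf d u)).eigenvalues j)
          + α / 2 * ∑ i, ‖d i‖ ^ 2 := by
    intro hK
    rw [sum_comp_sq_eigenvalues_hermitianDilation _ hK (fun t => f t.toNNReal - α / 2 * t),
      sum_sub_distrib, ← mul_sum, hK.sum_eigenvalues_conjTranspose_mul_self,
      sum_norm_sq_upperTriangularOf]
    ring
  simp_rw [hdilation]
  refine ((convexOn_sum_comp_eigenvalues hconv (fun u => isHermitian_hermitianDilation _)
    fun u v a b hab => ?_).smul (by norm_num)).add_const _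
  rw [upperTriangularOf_combo d u v hab, hermitianDilation_add, hermitianDilation_smul,
    hermitianDilation_smul]

open ComplexOrder in
/-- Let `f : ℝ≥0 → ℝ` and `α > 0` be such that `x ↦ f(x²) - (α/2)x²` is convex on `ℝ`.
Then for any fixed diagonal entries `d = (t₁₁, …, tₙₙ) ∈ ℂⁿ`, the map sending the
strictly upper triangular entries `u = (t_{ij})_{i<j}` to
`Tr f(TᴴT) - (α/2) ∑_{i<j} |t_{ij}|²` is convex, where `T` is the upper triangular
matrix with diagonal `d` and strictly upper entries `u`, and `f` is applied
spectrally (`Tr f(TᴴT) = ∑ i, f (λᵢ(TᴴT))`). -/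
theorem convex_trace_f_upperTriangular (n : ℕ) (f : NNReal → ℝ) (α : ℝ) (hα : 0 < α)
    (hconv : ConvexOn ℝ Set.univ fun x : ℝ => f (x ^ 2).toNNReal - α / 2 * x ^ 2)
    (d : Fin n → ℂ)
    (T : ({p : Fin n × Fin n // p.1 < p.2} → ℂ) → Matrix (Fin n) (Fin n) ℂ)
    (hT : ∀ u, T u = Matrix.of fun i j =>
      if h : i < j then u ⟨(i, j), h⟩ else if i = j then d i else 0) :
    ConvexOn ℝ Set.univ fun u : {p : Fin n × Fin n // p.1 < p.2} → ℂ =>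
      (∑ i, f ((Matrix.posSemidef_conjTranspose_mul_self (T u)).1.eigenvalues i).toNNReal)
        - α / 2 * ∑ p : {p : Fin n × Fin n // p.1 < p.2}, ‖u p‖ ^ 2 :=
  convex_trace_f_upperTriangular_general n f α hconv d T hT
end

section
/- Let T be an n×n upper triangular complex matrix whose diagonal entries t₁₁,…,tₙₙ are pairwise distinct. Then the real-linear map M ↦ π(MT − TM) from the skew-Hermitian matrices with zero diagonal to the strictly lower triangular matrices (π the projection onto the strictly lower triangular part) is a real-linear isomorphism. -/
open Matrix

/-- The real vector space `iH₀` of skew-Hermitian `n × n` complex matrices with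
zero diagonal. -/
noncomputable def iH0 (n : ℕ) : Submodule ℝ (Matrix (Fin n) (Fin n) ℂ) where
  carrier := {M | Mᴴ = -M ∧ ∀ i, M i i = 0}
  add_mem' := by
    rintro a b ⟨ha1, ha2⟩ ⟨hb1, hb2⟩
    refine ⟨by simp [conjTranspose_add, ha1, hb1, add_comm], fun i => by simp [Matrix.add_apply, ha2 i, hb2 i]⟩
  zero_mem' := by simp
  smul_mem' := by
    rintro c M ⟨h1, h2⟩
    refine ⟨by simp [conjTranspose_smul, h1], fun i => by simp [h2 i]⟩

/-- The real vector space `T^sl` of strictly lower triangular `n × n` complex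
matrices. -/
noncomputable def Tsl (n : ℕ) : Submodule ℝ (Matrix (Fin n) (Fin n) ℂ) where
  carrier := {M | ∀ i j : Fin n, i ≤ j → M i j = 0}
  add_mem' := by
    intro a b ha hb i j hij
    simp [Matrix.add_apply, ha i j hij, hb i j hij]
  zero_mem' := by simp
  smul_mem' := by
    intro c M h i j hij
    simp [h i j hij]

/-- The projection `π` onto the strictly lower triangular part. -/
noncomputable def lowerProj (n : ℕ) (X : Matrix (Fin n) (Fin n) ℂ) : Matrix (Fin n) (Fin n) ℂ :=
  Matrix.of fun i j => if j < i then X i j else 0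

/-- The real-linear map `C_T : iH₀ → T^sl`, `M ↦ π (M T − T M)`. -/
noncomputable def commProj (n : ℕ) (T : Matrix (Fin n) (Fin n) ℂ) : iH0 n →ₗ[ℝ] Tsl n where
  toFun M := ⟨lowerProj n ((M : Matrix (Fin n) (Fin n) ℂ) * T - T * M),
    fun i j hij => by simp [lowerProj, Matrix.of_apply, not_lt.mpr hij]⟩
  map_add' M N := by
    ext i j
    by_cases h : j < i <;>
      simp [lowerProj, Matrix.add_mul, Matrix.mul_add, Matrix.sub_apply, Matrix.add_apply, h] <;> ring
  map_smul' c M := by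
    ext i j
    by_cases h : j < i <;>
      simp [lowerProj, Matrix.smul_mul, Matrix.mul_smul, Matrix.sub_apply, Matrix.smul_apply, h, smul_sub]

/-!
For `j < i`, the `(i, j)` entry of `M T - T M` is `M i j * (T j j - T i i)` plus terms in the
entries `M i k` (`k < j`) and `M k j` (`i < k`), which lie further below the diagonal. So if
`π (M T - T M) = 0`, the strictly lower part of `M` vanishes entry by entry, starting from the
lower left corner, and a skew-Hermitian matrix with zero diagonal is determined by its strictly
lower part. Injectivity suffices because `M ↦ π M` identifies `iH₀` with `T^sl`, so both spaces
have the same real dimension.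
-/

namespace Matrix

variable {ι R : Type*} [Fintype ι] [LinearOrder ι]

theorem mul_apply_eq_mul_diag_of_upper [NonUnitalNonAssocSemiring R] {M T : Matrix ι ι R}
    {i j : ι} (hT : ∀ k, j < k → T k j = 0) (hM : ∀ k, k < j → M i k = 0) :
    (M * T) i j = M i j * T j j := by
  rw [mul_apply, Finset.sum_eq_single j (fun k _ hk => ?_) (by simp)]
  rcases lt_or_gt_of_ne hk with hkj | hjk
  · simp [hM k hkj]
  · simp [hT k hjk]

theorem mul_apply_eq_diag_mul_of_upper [NonUnitalNonAssocSemiring R] {M T : Matrix ι ι R}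
    {i j : ι} (hT : ∀ k, k < i → T i k = 0) (hM : ∀ k, i < k → M k j = 0) :
    (T * M) i j = T i i * M i j := by
  rw [mul_apply, Finset.sum_eq_single i (fun k _ hk => ?_) (by simp)]
  rcases lt_or_gt_of_ne hk with hki | hik
  · simp [hT k hki]
  · simp [hM k hik]

theorem lower_eq_zero_of_lower_commutator_eq_zero [CommRing R] [NoZeroDivisors R]
    {M T : Matrix ι ι R} (hT : ∀ i j, j < i → T i j = 0)
    (hdiag : ∀ i j, i ≠ j → T i i ≠ T j j) (hMT : ∀ i j, j < i → (M * T - T * M) i j = 0) :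
    ∀ i j, j < i → M i j = 0 := by
  intro i j
  induction j using WellFoundedLT.induction generalizing i with
  | _ j ihj =>
  induction i using WellFoundedGT.induction with
  | _ i ihi =>
  intro hji
  have hright : (M * T) i j = M i j * T j j :=
    mul_apply_eq_mul_diag_of_upper (fun k => hT k j) (fun k hkj => ihj k hkj i (hkj.trans hji))
  have hleft : (T * M) i j = T i i * M i j :=
    mul_apply_eq_diag_mul_of_upper (fun k => hT i k) (fun k hik => ihi k hik (hji.trans hik))
  have hentry : M i j * (T j j - T i i) = 0 := by
    rw [← hMT i j hji, sub_apply, hright, hleft]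
    ring
  exact (mul_eq_zero.mp hentry).resolve_right (sub_ne_zero.mpr (hdiag j i hji.ne))

end Matrix

section

variable {n : ℕ}

theorem lowerProj_eq_zero_iff {X : Matrix (Fin n) (Fin n) ℂ} :
    lowerProj n X = 0 ↔ ∀ i j, j < i → X i j = 0 := by
  simp only [lowerProj, ← Matrix.ext_iff, of_apply, Matrix.zero_apply, ite_eq_right_iff]

theorem lowerProj_sub_conjTranspose_lowerProj {M : Matrix (Fin n) (Fin n) ℂ} (hM : M ∈ iH0 n) :
    lowerProj n M - (lowerProj n M)ᴴ = M := by
  obtain ⟨hskew, hdiag⟩ := hM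
  ext i j
  rcases lt_trichotomy j i with hji | rfl | hij
  · simp [lowerProj, conjTranspose_apply, hji, hji.not_gt]
  · simp [lowerProj, hdiag j]
  · have hconj : star (M j i) = -M i j := by
      simpa [conjTranspose_apply] using congrFun (congrFun hskew i) j
    simp [lowerProj, conjTranspose_apply, hij, hij.not_gt, hconj]

theorem sub_conjTranspose_mem_iH0 {L : Matrix (Fin n) (Fin n) ℂ} (hL : L ∈ Tsl n) :
    L - Lᴴ ∈ iH0 n :=
  ⟨by simp [conjTranspose_sub], fun i => by simp [conjTranspose_apply, hL i i le_rfl]⟩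

theorem lowerProj_sub_conjTranspose {L : Matrix (Fin n) (Fin n) ℂ} (hL : L ∈ Tsl n) :
    lowerProj n (L - Lᴴ) = L := by
  ext i j
  by_cases hji : j < i
  · simp [lowerProj, conjTranspose_apply, hji, hL j i hji.le]
  · simp [lowerProj, hji, hL i j (not_lt.mp hji)]

variable (n) in
noncomputable def lowerProjEquiv : iH0 n ≃ₗ[ℝ] Tsl n where
  toFun M := ⟨lowerProj n M, fun i j hij => by simp [lowerProj, not_lt.mpr hij]⟩
  map_add' M N := by
    ext i j
    by_cases h : j < i <;> simp [lowerProj, h]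
  map_smul' c M := by
    ext i j
    by_cases h : j < i <;> simp [lowerProj, h]
  invFun L := ⟨L - (L : Matrix (Fin n) (Fin n) ℂ)ᴴ, sub_conjTranspose_mem_iH0 L.2⟩
  left_inv M := Subtype.ext (lowerProj_sub_conjTranspose_lowerProj M.2)
  right_inv L := Subtype.ext (lowerProj_sub_conjTranspose L.2)

theorem commProj_injective {T : Matrix (Fin n) (Fin n) ℂ} (hT : ∀ i j : Fin n, j < i → T i j = 0)
    (hdiag : ∀ i j : Fin n, i ≠ j → T i i ≠ T j j) : Function.Injective (commProj n T) := by
  rw [injective_iff_map_eq_zero]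
  rintro ⟨M, hM⟩ hzero
  have hcomm : lowerProj n (M * T - T * M) = 0 := congrArg Subtype.val hzero
  have hlower : lowerProj n M = 0 := lowerProj_eq_zero_iff.mpr <|
    lower_eq_zero_of_lower_commutator_eq_zero hT hdiag (lowerProj_eq_zero_iff.mp hcomm)
  ext1
  simpa [hlower] using (lowerProj_sub_conjTranspose_lowerProj hM).symm

end

/-- If the diagonal entries of the upper triangular matrix `T` are pairwise
distinct, then the real-linear map `C_T : iH₀ → T^sl`, `M ↦ π(MT − TM)`, is a
real-linear isomorphism. -/
theorem commProj_bijective (n : ℕ) (T : Matrix (Fin n) (Fin n) ℂ)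
    (hT : ∀ i j : Fin n, j < i → T i j = 0)
    (hdiag : ∀ i j : Fin n, i ≠ j → T i i ≠ T j j) :
    Function.Bijective (commProj n T) :=
  have hinj := commProj_injective hT hdiag
  ⟨hinj, (LinearMap.injective_iff_surjective_of_finrank_eq_finrank
    (lowerProjEquiv n).finrank_eq).mp hinj⟩
end

section
/- For z₁,…,zₙ ∈ ℂ, the set O_{z₁,…,zₙ} := {(t₁,…,tₙ) ∈ ℂⁿ : for all i < j, |zᵢ − tᵢ| < |zᵢ − tⱼ|} is admissible: the permuted copies σ·O := {(t_{σ(1)},…,t_{σ(n)}) : t ∈ O}, σ ∈ Sₙ, are pairwise disjoint open sets, and the complement of their union in ℂⁿ has Lebesgue measure zero. -/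
/-!
For almost every `t ∈ ℂⁿ` the distances `‖zᵢ - tₐ‖`, `a = 1, …, n`, are pairwise distinct for
each `i`: the exceptional set is a finite union of sets `{‖c - tₐ‖ = ‖c - t_b‖}`, each null by
Fubini since its slices in the variable `t_b` are spheres. For such `t`, a permutation `π`
minimising `(‖zᵢ - t_{π i}‖)ᵢ` lexicographically puts `t ∘ π` in `O` (otherwise a transposition
would decrease it), and conversely `t ∘ π ∈ O` makes `π` the strict lexicographic minimiser, so
the permuted copies of `O` are disjoint and cover `ℂⁿ` up to a null set.
-/

open MeasureTheory

/-- The set `O_{z₁,…,zₙ} = {t ∈ ℂⁿ : ∀ i < j, |zᵢ − tᵢ| < |zᵢ − tⱼ|}`. -/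
def Oset (n : ℕ) (z : Fin n → ℂ) : Set (Fin n → ℂ) :=
  {t | ∀ i j : Fin n, i < j → ‖z i - t i‖ < ‖z i - t j‖}

theorem MeasureTheory.Measure.pi_eq_zero_of_forall_update_null {ι : Type*} [Fintype ι]
    [DecidableEq ι] {X : ι → Type*} [∀ i, MeasurableSpace (X i)] (μ : ∀ i, Measure (X i))
    [∀ i, SigmaFinite (μ i)] {S : Set (∀ i, X i)} (hS : MeasurableSet S) (b : ι)
    (h : ∀ x, μ b {y | Function.update x b y ∈ S} = 0) :
    Measure.pi μ S = 0 := by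
  have hslice : ∫⋯∫⁻_{b}, S.indicator 1 ∂μ = ∫⋯∫⁻_{b}, 0 ∂μ := by
    ext x
    rw [lmarginal_singleton, lmarginal_singleton]
    simp only [Pi.zero_apply, lintegral_zero]
    change ∫⁻ y, (Function.update x b ⁻¹' S).indicator 1 y ∂μ b = 0
    rw [lintegral_indicator_one (measurable_update x hS)]
    exact h x
  calc Measure.pi μ S = ∫⁻ x, S.indicator 1 x ∂Measure.pi μ := (lintegral_indicator_one hS).symm
    _ = ∫⁻ _, 0 ∂Measure.pi μ :=
      lintegral_eq_of_lmarginal_eq {b} (measurable_one.indicator hS) measurable_const hslice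
    _ = 0 := lintegral_zero

section EqualDistance

variable {ι E : Type*} [Fintype ι] [NormedAddCommGroup E] [NormedSpace ℝ E]
  [FiniteDimensional ℝ E] [Nontrivial E] [MeasureSpace E] [BorelSpace E]
  [(volume : Measure E).IsAddHaarMeasure]

theorem volume_setOf_norm_sub_eq_norm_sub (c : E) {a b : ι} (hab : a ≠ b) :
    volume {s : ι → E | ‖c - s a‖ = ‖c - s b‖} = 0 := by
  classical
  refine Measure.pi_eq_zero_of_forall_update_null _
    (measurableSet_eq_fun (by fun_prop) (by fun_prop)) b fun s => ?_
  convert Measure.addHaar_sphere (volume : Measure E) c ‖c - s a‖ using 2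
  ext y
  simp [Function.update_of_ne hab, mem_sphere_iff_norm, norm_sub_rev, eq_comm]

theorem volume_setOf_exists_norm_sub_eq_norm_sub {κ : Type*} [Countable κ] (c : κ → E) :
    volume {s : ι → E | ∃ k a b, a ≠ b ∧ ‖c k - s a‖ = ‖c k - s b‖} = 0 := by
  simp only [Set.ofPred_exists]
  refine measure_iUnion_null fun k => measure_iUnion_null fun a => measure_iUnion_null fun b => ?_
  obtain rfl | hab := eq_or_ne a b
  · simp
  · exact measure_mono_null (fun _ => And.right) (volume_setOf_norm_sub_eq_norm_sub (c k) hab)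

end EqualDistance

theorem image_comp_perm_eq_preimage {ι α : Type*} (σ : Equiv.Perm ι) (S : Set (ι → α)) :
    (fun t => t ∘ σ) '' S = (fun t => t ∘ σ.symm) ⁻¹' S :=
  congrFun (Set.image_eq_preimage_of_inverse (fun t => by ext; simp) (fun t => by ext; simp)) S

theorem isOpen_Oset (n : ℕ) (z : Fin n → ℂ) : IsOpen (Oset n z) := by
  simp only [Oset, Set.ofPred_forall]
  exact isOpen_iInter_of_finite fun i => isOpen_iInter_of_finite fun j =>
    isOpen_iInter_of_finite fun _ => isOpen_lt (by fun_prop) (by fun_prop)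

section DistLex

variable {n : ℕ} (z s : Fin n → ℂ)

noncomputable def distLex (π : Equiv.Perm (Fin n)) : Lex (Fin n → ℝ) :=
  toLex fun i => ‖z i - s (π i)‖

variable {z s}

theorem distLex_lt_of_comp_mem_Oset {π ρ : Equiv.Perm (Fin n)} (hπ : s ∘ π ∈ Oset n z)
    (hne : π ≠ ρ) : distLex z s π < distLex z s ρ := by
  obtain ⟨i, hi, hmin⟩ := wellFounded_lt.has_min {i | π i ≠ ρ i} (DFunLike.ne_iff.1 hne)
  have hagree : ∀ k < i, π k = ρ k := fun k hk => not_not.1 fun h => hmin k h hk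
  obtain ⟨j, hπj⟩ : ∃ j, π j = ρ i := π.surjective _
  have hij : i < j := by
    rcases lt_trichotomy i j with h | rfl | h
    · exact h
    · exact absurd hπj hi
    · exact absurd (ρ.injective ((hagree j h).symm.trans hπj)) h.ne
  refine ⟨i, fun k hk => by simp [distLex, hagree k hk], ?_⟩
  simpa [distLex, hπj] using hπ i j hij

theorem perm_eq_of_comp_mem_Oset {π ρ : Equiv.Perm (Fin n)} (hπ : s ∘ π ∈ Oset n z)
    (hρ : s ∘ ρ ∈ Oset n z) : π = ρ := by
  by_contra hne
  exact lt_asymm (distLex_lt_of_comp_mem_Oset hπ hne)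
    (distLex_lt_of_comp_mem_Oset hρ (Ne.symm hne))

variable (hs : ∀ i a b, a ≠ b → ‖z i - s a‖ ≠ ‖z i - s b‖)
include hs

theorem comp_mem_Oset_of_forall_distLex_le {π : Equiv.Perm (Fin n)}
    (hmin : ∀ ρ, distLex z s π ≤ distLex z s ρ) : s ∘ π ∈ Oset n z := by
  intro i j hij
  by_contra hcon
  have hgt : ‖z i - s (π j)‖ < ‖z i - s (π i)‖ :=
    (not_lt.1 hcon).lt_of_ne (hs i _ _ (π.injective.ne hij.ne'))
  refine (hmin (π * Equiv.swap i j)).not_gt ⟨i, fun k hk => ?_, ?_⟩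
  · simp [distLex, Equiv.swap_apply_of_ne_of_ne hk.ne (hk.trans hij).ne]
  · simpa [distLex] using hgt

theorem exists_comp_mem_Oset : ∃ π : Equiv.Perm (Fin n), s ∘ π ∈ Oset n z :=
  let ⟨π, hπ⟩ := Finite.exists_min (distLex z s)
  ⟨π, comp_mem_Oset_of_forall_distLex_le hs hπ⟩

end DistLex

/-- The set `O_{z₁,…,zₙ}` is admissible: its permuted copies
`σ·O = {(t_{σ(1)},…,t_{σ(n)}) : t ∈ O}` are pairwise disjoint open sets whose
union has null complement for the Lebesgue measure on `ℂⁿ`. -/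
theorem Oset_admissible (n : ℕ) (z : Fin n → ℂ) :
    (∀ σ : Equiv.Perm (Fin n), IsOpen ((fun t : Fin n → ℂ => t ∘ σ) '' Oset n z)) ∧
    (∀ σ τ : Equiv.Perm (Fin n), σ ≠ τ →
      Disjoint ((fun t : Fin n → ℂ => t ∘ σ) '' Oset n z)
        ((fun t : Fin n → ℂ => t ∘ τ) '' Oset n z)) ∧
    volume (⋃ σ : Equiv.Perm (Fin n), (fun t : Fin n → ℂ => t ∘ σ) '' Oset n z)ᶜ = 0 := by
  simp only [image_comp_perm_eq_preimage]
  refine ⟨fun σ => (isOpen_Oset n z).preimage (by fun_prop), fun σ τ hne => ?_, ?_⟩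
  · exact Set.disjoint_left.2 fun s hσ hτ =>
      hne (Equiv.symm_bijective.injective (perm_eq_of_comp_mem_Oset hσ hτ))
  · refine measure_mono_null (Set.compl_subset_comm.2 fun s hs => ?_)
      (volume_setOf_exists_norm_sub_eq_norm_sub z)
    simp only [Set.mem_compl_iff, Set.mem_ofPred_eq, not_exists, not_and] at hs
    obtain ⟨π, hπ⟩ := exists_comp_mem_Oset hs
    exact Set.mem_iUnion.2 ⟨π.symm, by simpa using hπ⟩
end
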